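/- For n ≥ 2, the real Lie algebra su(n) of traceless skew-Hermitian complex n×n matrices (viewed as a real Lie algebra with bracket the matrix commutator) has no essential elements. -/

import Mathlib

open Matrix

attribute [local instance 100] LieRing.ofAssociativeRing

/-- The linear span of all brackets `⁅a, b⁆` with `a ∈ A`, `b ∈ B`. -/
def bracketSpan {L : Type*} [LieRing L] [LieAlgebra ℝ L] (A B : Submodule ℝ L) :
    Submodule ℝ L :=
  Submodule.span ℝ {x | ∃ a ∈ A, ∃ b ∈ B, x = ⁅a, b⁆}

/-- `m` is essential: `ad m` is diagonalizable over `ℝ` and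
`ℝ·m + [m,g] + [[m,g],[m,g]] = g`. -/
def Essential {L : Type*} [LieRing L] [LieAlgebra ℝ L] (m : L) : Prop :=
  (⨆ c : ℝ, (LieAlgebra.ad ℝ L m).eigenspace c) = ⊤ ∧
    Submodule.span ℝ {m} ⊔ LinearMap.range (LieAlgebra.ad ℝ L m) ⊔
      bracketSpan (LinearMap.range (LieAlgebra.ad ℝ L m))
        (LinearMap.range (LieAlgebra.ad ℝ L m)) = ⊤

/-- `su(n)`: the real Lie algebra of traceless skew-Hermitian complex `n × n` matrices. -/
def suLie (n : ℕ) : LieSubalgebra ℝ (Matrix (Fin n) (Fin n) ℂ) where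
  carrier := {X | Xᴴ = -X ∧ X.trace = 0}
  zero_mem' := by simp
  add_mem' := by
    rintro a b ⟨ha1, ha2⟩ ⟨hb1, hb2⟩
    refine ⟨?_, ?_⟩
    · rw [conjTranspose_add, ha1, hb1, neg_add]
    · rw [trace_add, ha2, hb2, add_zero]
  smul_mem' := by
    rintro r X ⟨hX1, hX2⟩
    refine ⟨?_, ?_⟩
    · rw [conjTranspose_smul, star_trivial, hX1, smul_neg]
    · rw [trace_smul, hX2, smul_zero]
  lie_mem' := by
    rintro X Y ⟨hX1, _⟩ ⟨hY1, _⟩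
    refine ⟨?_, ?_⟩
    · rw [Ring.lie_def, conjTranspose_sub, conjTranspose_mul, conjTranspose_mul,
        hX1, hY1, neg_mul_neg, neg_mul_neg, neg_sub]
    · rw [Ring.lie_def, trace_sub, trace_mul_comm, sub_self]

/-!
For skew-Hermitian `m`, `ad m` is skew-adjoint for the positive definite form `tr (xᴴ y)`,
so its only real eigenvalue is `0`. Hence if `ad m` is diagonalizable over `ℝ` it vanishes,
and then `ℝ·m + [m,g] + [[m,g],[m,g]] = ℝ·m`, which is too small once `n ≥ 2`.
-/

theorem Module.End.eq_zero_of_iSup_eigenspace_eq_top {R M : Type*} [CommRing R]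
    [AddCommGroup M] [Module R M] {f : Module.End R M} (h : ⨆ c, f.eigenspace c = ⊤)
    (h0 : ∀ c ≠ 0, f.eigenspace c = ⊥) : f = 0 := by
  rw [← LinearMap.ker_eq_top, ← Module.End.eigenspace_zero, eq_top_iff, ← h]
  refine iSup_le fun c => ?_
  rcases eq_or_ne c 0 with rfl | hc
  · exact le_rfl
  · simp [h0 c hc]

theorem Submodule.span_singleton_ne_top_of_linearIndependent_pair {K V : Type*} [DivisionRing K]
    [AddCommGroup V] [Module K V] {x y : V} (h : LinearIndependent K ![x, y]) (m : V) :
    K ∙ m ≠ ⊤ := by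
  intro htop
  have h2 : (2 : Cardinal) ≤ Module.rank K V := by simpa using h.cardinal_lift_le_rank
  have h1 := rank_span_le (R := K) ({m} : Set V)
  rw [htop, rank_top, Cardinal.mk_singleton] at h1
  exact absurd (h2.trans h1) (by norm_num)

section Essential

variable {L : Type*} [LieRing L] [LieAlgebra ℝ L]

theorem bracketSpan_bot_left (B : Submodule ℝ L) : bracketSpan ⊥ B = ⊥ := by
  rw [eq_bot_iff, bracketSpan, Submodule.span_le]
  rintro x ⟨a, ha, b, -, rfl⟩
  simp [(Submodule.mem_bot ℝ).mp ha]

theorem Essential.span_singleton_eq_top {m : L} (hm : Essential m)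
    (had : LieAlgebra.ad ℝ L m = 0) : ℝ ∙ m = ⊤ := by
  simpa [had, bracketSpan_bot_left] using hm.2

end Essential

namespace Matrix

open scoped ComplexOrder

variable {ι : Type*} [Fintype ι] [DecidableEq ι]

theorem eq_zero_of_lie_eq_smul {m x : Matrix ι ι ℂ} (hm : mᴴ = -m) {c : ℝ} (hc : c ≠ 0)
    (hx : ⁅m, x⁆ = c • x) : x = 0 := by
  have hx' : ⁅m, xᴴ⁆ = c • xᴴ := by
    have := congrArg conjTranspose hx
    simp only [Ring.lie_def, conjTranspose_sub, conjTranspose_mul, hm, conjTranspose_smul,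
      star_trivial] at this ⊢
    rw [← this]; noncomm_ring
  -- the left side telescopes to `tr (m (xᴴ x)) - tr ((xᴴ x) m)`
  have hsum : (xᴴ * ⁅m, x⁆ + ⁅m, xᴴ⁆ * x).trace = 0 := by
    simp only [Ring.lie_def, mul_sub, sub_mul, trace_add, trace_sub, ← mul_assoc]
    rw [mul_assoc m, trace_mul_comm m]
    ring
  rw [hx, hx', Matrix.mul_smul, Matrix.smul_mul, ← add_smul, trace_smul] at hsum
  exact trace_conjTranspose_mul_self_eq_zero_iff.mp
    ((smul_eq_zero.mp hsum).resolve_left (by simpa using hc))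

end Matrix

namespace suLie

variable {n : ℕ}

theorem single_sub_single_star_mem {i j : Fin n} (hij : i ≠ j) (c : ℂ) :
    single i j c - single j i (star c) ∈ suLie n := by
  refine ⟨?_, ?_⟩
  · simp [conjTranspose_single]
  · rw [trace_sub, trace_single_eq_of_ne _ _ _ hij, trace_single_eq_of_ne _ _ _ hij.symm,
      sub_zero]

theorem eigenspace_ad_eq_bot (m : suLie n) {c : ℝ} (hc : c ≠ 0) :
    (LieAlgebra.ad ℝ (suLie n) m).eigenspace c = ⊥ := by
  refine (Submodule.eq_bot_iff _).mpr fun x hx => Subtype.ext ?_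
  rw [Module.End.mem_eigenspace_iff] at hx
  exact eq_zero_of_lie_eq_smul m.2.1 hc (congrArg Subtype.val hx)

theorem exists_linearIndependent_pair (hn : 2 ≤ n) :
    ∃ x y : suLie n, LinearIndependent ℝ ![x, y] := by
  have : Nontrivial (Fin n) := Fin.nontrivial_iff_two_le.mpr hn
  obtain ⟨i, j, hij⟩ := exists_pair_ne (Fin n)
  let X (c : ℂ) : suLie n := ⟨_, single_sub_single_star_mem hij c⟩
  refine ⟨X 1, X Complex.I, LinearIndependent.pair_iff.mpr fun s t hst => ?_⟩
  have hentry : (s : ℂ) + t * Complex.I = 0 := by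
    simpa [X, hij, hij.symm] using congrFun (congrFun (congrArg Subtype.val hst) i) j
  exact ⟨by simpa using congrArg Complex.re hentry, by simpa using congrArg Complex.im hentry⟩

end suLie

/-- For `n ≥ 2`, the real Lie algebra `su(n)` has no essential elements. -/
theorem suLie_no_essential (n : ℕ) (hn : 2 ≤ n) : ∀ m : suLie n, ¬ Essential m := by
  intro m hm
  have had : LieAlgebra.ad ℝ (suLie n) m = 0 :=
    Module.End.eq_zero_of_iSup_eigenspace_eq_top hm.1 fun c hc => suLie.eigenspace_ad_eq_bot m hc
  obtain ⟨x, y, hxy⟩ := suLie.exists_linearIndependent_pair hn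
  exact Submodule.span_singleton_ne_top_of_linearIndependent_pair hxy m
    (hm.span_singleton_eq_top had)
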